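/- arXiv:math/0610393 — 2 statements merged into one kernel-verified Lean document; each statement's English description precedes it below -/
import Mathlib

section
/- Let E₁, E₂, V be positive real numbers with E₂/E₁ ≥ e. If either V ≤ E₂/log(E₂/E₁), or V·log(V/E₁) ≤ 2E₂ with V ≥ E₂/log(E₂/E₁), then V ≤ 2E₂ / log(E₂/(E₁·log(E₂/E₁))). -/
open Real

/-- The real-analytic disjunction at the core of the Falik–Samorodnitsky lemma. -/
theorem falik_samorodnitsky_disjunction
    (E₁ E₂ V : ℝ) (hE₁ : 0 < E₁) (hE₂ : 0 < E₂) (hV : 0 < V)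
    (hratio : Real.exp 1 ≤ E₂ / E₁)
    (hdisj : V ≤ E₂ / Real.log (E₂ / E₁) ∨
      (V * Real.log (V / E₁) ≤ 2 * E₂ ∧ E₂ / Real.log (E₂ / E₁) ≤ V)) :
    V ≤ 2 * E₂ / Real.log (E₂ / (E₁ * Real.log (E₂ / E₁))) := by
  set L := Real.log (E₂ / E₁) with hL
  have hL1 : 1 ≤ L := by
    rw [hL]
    calc 1 = Real.log (Real.exp 1) := (Real.log_exp 1).symm
      _ ≤ Real.log (E₂ / E₁) := by
        apply Real.log_le_log (Real.exp_pos 1) hratio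
  have hLpos : 0 < L := lt_of_lt_of_le one_pos hL1
  have hDeq : Real.log (E₂ / (E₁ * L)) = L - Real.log L := by
    rw [Real.log_div hE₂.ne' (by positivity), Real.log_mul hE₁.ne' hLpos.ne', hL,
        Real.log_div hE₂.ne' hE₁.ne']
    ring
  have hD1 : 1 ≤ Real.log (E₂ / (E₁ * L)) := by
    rw [hDeq]
    have := Real.log_le_sub_one_of_pos hLpos
    linarith
  have hDpos : 0 < Real.log (E₂ / (E₁ * L)) := lt_of_lt_of_le one_pos hD1
  have hDleL : Real.log (E₂ / (E₁ * L)) ≤ L := by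
    rw [hDeq]
    have : 0 ≤ Real.log L := Real.log_nonneg hL1
    linarith
  rcases hdisj with h | ⟨h1, h2⟩
  · calc V ≤ E₂ / L := h
      _ ≤ 2 * E₂ / Real.log (E₂ / (E₁ * L)) := by
        rw [div_le_div_iff₀ hLpos hDpos]
        nlinarith
  · rw [le_div_iff₀ hDpos]
    have hVE : Real.log (E₂ / (E₁ * L)) ≤ Real.log (V / E₁) := by
      apply Real.log_le_log (by positivity)
      rw [div_le_div_iff₀ (by positivity) hE₁]
      have := (div_le_iff₀ hLpos).mp h2
      nlinarith
    nlinarith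
end

section
/- Let A, Z be disjoint finite nonempty vertex sets in a graph with edge set E, and let resistances be i.i.d. with law ν = (1/2)δ_a + (1/2)δ_b, 0 < a ≤ b < ∞. Define f(r) = R_r(A↔Z) (effective resistance) and assume a unique unit minimizing flow θ_r with |θ_r(e)| ≤ 1 for all e. Then Σ_{e∈E} ‖Δ_e f‖₂² ≤ ((b-a)²/(2a)) · E[f], where Δ_e f(r) = (f(r) - f(σ_e r))/2 and σ_e flips the resistance at edge e between a and b. -/
open MeasureTheory ProbabilityTheory Filter Real
open scoped Classical

noncomputable section

/-- An unoriented multigraph presented by a choice of orientation for each edge: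
`src e` and `tgt e` are the two endpoints of the edge `e`. -/
structure Network (V E : Type*) where
  src : E → V
  tgt : E → V

namespace Network

variable {V E : Type*}

/-- The net flow out of vertex `x`, where `θ e` is the (signed) flow along edge `e`
from `src e` to `tgt e`.  (This encodes an antisymmetric function on oriented edges.) -/
def flowAt (N : Network V E) (θ : E → ℝ) (x : V) : ℝ :=
  ∑' e : E, ((if N.src e = x then θ e else 0) - (if N.tgt e = x then θ e else 0))

/-- `θ` is a flow of strength `1` from the source set `A` to the sink set `Z`:
it satisfies the node law outside `A ∪ Z` and the total flow out of `A` is `1`. -/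
structure IsUnitFlow (N : Network V E) (θ : E → ℝ) (A Z : Set V) : Prop where
  node : ∀ x, x ∉ A → x ∉ Z → N.flowAt θ x = 0
  strength : ∑' x : A, N.flowAt θ x = 1

/-- The energy `∑ r_e θ(e)²` of a flow `θ` with respect to resistances `r`. -/
def energy (r θ : E → ℝ) : ℝ := ∑' e : E, r e * θ e ^ 2

/-- The effective resistance between `A` and `Z`:
the infimum of the energy over all unit flows from `A` to `Z`. -/
def effRes (N : Network V E) (r : E → ℝ) (A Z : Set V) : ℝ :=
  sInf {c | ∃ θ : E → ℝ, N.IsUnitFlow θ A Z ∧ c = energy r θ}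

end Network

/-- The coordinates of `μ` are i.i.d. with the symmetric Bernoulli law
`(1/2)δ_a + (1/2)δ_b`. -/
def IsBernoulliIID (E : Type*) (μ : Measure (E → ℝ)) (a b : ℝ) : Prop :=
  IsProbabilityMeasure μ ∧
  iIndepFun (fun e (ω : E → ℝ) => ω e) μ ∧
  ∀ e : E, μ.map (fun ω => ω e)
    = (2⁻¹ : ENNReal) • Measure.dirac a + (2⁻¹ : ENNReal) • Measure.dirac b

/-- Flip the resistance of edge `e` between the two values `a` and `b`. -/
def flipEdge {E : Type*} [DecidableEq E] (a b : ℝ) (r : E → ℝ) (e : E) : E → ℝ :=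
  Function.update r e (a + b - r e)

/-- The discrete gradient `Δ_e f (r) = (f(r) - f(σ_e r))/2`. -/
def grad {E : Type*} [DecidableEq E] (a b : ℝ) (f : (E → ℝ) → ℝ) (e : E) (r : E → ℝ) : ℝ :=
  (f r - f (flipEdge a b r e)) / 2


/-!
Write `f r = R_r(A ↔ Z)`, `σ_e` for the flip at `e` and `φ_e(r) = ((f(σ_e r) - f(r))⁺)²`.
Since `σ_e` is an involution preserving `μ`, `‖Δ_e f‖₂² = ½ E[φ_e]`. At an `{a,b}`-configuration
`r` the minimizing flow `θ_r` is still a unit flow at `σ_e r`, so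
`f(σ_e r) - f(r) ≤ (b - a) θ_r(e)²`; with `|θ_r(e)| ≤ 1` this gives `φ_e(r) ≤ (b - a)² θ_r(e)²`,
and `a Σ_e θ_r(e)² ≤ Σ_e r_e θ_r(e)² = f(r)`.

As `E` may be uncountable, the `{a,b}`-configurations need not form a measurable set. Pointwise
inequalities on them still hold almost surely, because a measurable set of the product σ-algebra
depends on countably many coordinates only. If `f` is not a.e. strongly measurable, the right-hand
side is the junk value `0`, and so is every `‖Δ_e f‖₂²`: either some unit flow has infinite
`ℓ²`-norm, and then `f = 0` at every configuration; or all unit flows live on a countable edge set,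
and then `f` is measurable after all; or they do not, and negative resistances on a suitable
sequence of edges make the energies unbounded below, so that `f` takes its junk value `0` at both
`r` and `σ_e r`, whatever countably many coordinates of `r` are prescribed.
-/

section CountablyDetermined

variable {ι X : Type*} [MeasurableSpace X] {μ : Measure (ι → X)} {s : Set X}

theorem ae_le_of_forall_exists_eqOn {g₁ g₂ : (ι → X) → ℝ} (hs : ∀ i, ∀ᵐ r ∂μ, r i ∈ s)
    (hne : s.Nonempty) (h₁ : AEStronglyMeasurable g₁ μ) (h₂ : AEStronglyMeasurable g₂ μ)
    (h : ∀ I : Set ι, I.Countable → ∀ r : ι → X, (∀ i, r i ∈ s) →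
      ∃ r', Set.EqOn r' r I ∧ g₁ r' ≤ g₂ r') :
    g₁ ≤ᵐ[μ] g₂ := by
  obtain ⟨G, hGae, hGm, hG⟩ := (h₁.ae_eq_mk.and h₂.ae_eq_mk).exists_measurable_mem
  set T := G ∩ {r | h₂.mk g₂ r < h₁.mk g₁ r}
  have hTm : MeasurableSet T := hGm.inter <|
    measurableSet_lt h₂.stronglyMeasurable_mk.measurable h₁.stronglyMeasurable_mk.measurable
  suffices hT : μ T = 0 by
    filter_upwards [hGae, measure_eq_zero_iff_ae_notMem.1 hT] with r hrG hrT
    rw [(hG r hrG).1, (hG r hrG).2]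
    exact not_lt.1 fun hlt => hrT ⟨hrG, hlt⟩
  by_contra hT
  -- `T` is determined by countably many coordinates `I`, on which a.e. point lies in `s`.
  obtain ⟨I, t, hI, hTt⟩ := hTm.eq_preimage_restrict_countable
  obtain ⟨r, hrT, hrs⟩ := Measure.exists_mem_of_measure_ne_zero_of_ae hT <|
    ae_restrict_of_ae <| (ae_ball_iff hI).2 fun i _ => hs i
  obtain ⟨x, hx⟩ := hne
  obtain ⟨r', hr'I, hle⟩ := h I hI (I.piecewise r fun _ => x) fun i => by
    by_cases hi : i ∈ I <;> simp [hi, hrs i, hx]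
  have hr'T : r' ∈ T := by
    rw [hTt, Set.mem_preimage] at hrT ⊢
    convert hrT using 1
    funext i
    simp [hr'I i.2, i.2]
  rw [(hG r' hr'T.1).1, (hG r' hr'T.1).2] at hle
  exact hle.not_gt hr'T.2

theorem ae_le_of_forall_mem_le {g₁ g₂ : (ι → X) → ℝ} (hs : ∀ i, ∀ᵐ r ∂μ, r i ∈ s)
    (hne : s.Nonempty) (h₁ : AEStronglyMeasurable g₁ μ) (h₂ : AEStronglyMeasurable g₂ μ)
    (h : ∀ r, (∀ i, r i ∈ s) → g₁ r ≤ g₂ r) : g₁ ≤ᵐ[μ] g₂ :=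
  ae_le_of_forall_exists_eqOn hs hne h₁ h₂ fun I _ r hr => ⟨r, Set.eqOn_refl r I, h r hr⟩

theorem integrable_of_forall_mem_abs_le [IsFiniteMeasure μ] {g : (ι → X) → ℝ}
    (hs : ∀ i, ∀ᵐ r ∂μ, r i ∈ s) (hne : s.Nonempty) (hg : AEStronglyMeasurable g μ) (C : ℝ)
    (h : ∀ r, (∀ i, r i ∈ s) → |g r| ≤ C) : Integrable g μ :=
  (integrable_const C).mono' hg <|
    ae_le_of_forall_mem_le hs hne hg.norm aestronglyMeasurable_const h

end CountablyDetermined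

theorem integral_sq_sub_comp_eq {α : Type*} [MeasurableSpace α] {μ : Measure α} {σ : α → α}
    (hσ : MeasurePreserving σ μ μ) (hinv : Function.Involutive σ) {f : α → ℝ}
    (hf : Integrable (fun x => max (f (σ x) - f x) 0 ^ 2) μ) :
    ∫ x, (f x - f (σ x)) ^ 2 ∂μ = 2 * ∫ x, max (f (σ x) - f x) 0 ^ 2 ∂μ := by
  set φ := fun x => max (f (σ x) - f x) 0 ^ 2
  have hsplit (x : α) : (f x - f (σ x)) ^ 2 = φ x + φ (σ x) := by
    simp only [φ, hinv x]
    rcases le_total (f (σ x)) (f x) with h | h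
    · rw [max_eq_right (by linarith), max_eq_left (by linarith)]; ring
    · rw [max_eq_left (by linarith), max_eq_right (by linarith)]; ring
  have hcomp : ∫ x, φ (σ x) ∂μ = ∫ x, φ x ∂μ := by
    rw [← integral_map hσ.measurable.aemeasurable (hσ.map_eq.symm ▸ hf.aestronglyMeasurable),
      hσ.map_eq]
  simp_rw [hsplit]
  rw [integral_add (g := fun x => φ (σ x)) hf (hσ.integrable_comp_of_integrable hf), hcomp]
  ring

theorem Set.exists_seq_of_not_countable {α : Type*} {s : Set α} (hs : ¬ s.Countable)
    {D : Set α} (hD : D.Countable) (g : α → Set α) (hg : ∀ x ∈ s, (g x).Countable) :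
    ∃ x : ℕ → α, (∀ n, x n ∈ s ∧ x n ∉ D) ∧ ∀ m n, m < n → x n ∉ g (x m) := by
  obtain ⟨x₀, -⟩ : s.Nonempty := Set.nonempty_iff_ne_empty.2 fun h => hs (h ▸ Set.countable_empty)
  have : Nonempty α := ⟨x₀⟩
  have hpick (C : Set α) (hC : C.Countable) : ∃ x ∈ s, x ∉ C := by
    by_contra! h
    exact hs (hC.mono h)
  choose! pick hpick_mem hpick_notMem using hpick
  let C : ℕ → Set α := fun n => Nat.rec (motive := fun _ => Set α) D
    (fun _ C' => C' ∪ g (pick C')) n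
  have hC (n : ℕ) : (C n).Countable := by
    induction n with
    | zero => exact hD
    | succ n ih => exact ih.union (hg _ (hpick_mem _ ih))
  have hmono : Monotone C := monotone_nat_of_le_succ fun n => Set.subset_union_left
  refine ⟨fun n => pick (C n), fun n => ⟨hpick_mem _ (hC n), fun hD' =>
    hpick_notMem _ (hC n) (hmono (Nat.zero_le n) hD')⟩, fun m n hmn hg' =>
    hpick_notMem _ (hC n) (hmono hmn (Set.subset_union_right hg'))⟩

theorem mem_Icc_of_eq_or_eq {a b x : ℝ} (hab : a ≤ b) (hx : x = a ∨ x = b) : x ∈ Set.Icc a b := by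
  rcases hx with rfl | rfl <;> simp [hab]

section Flip

variable {E : Type*} [DecidableEq E] {a b : ℝ} {r : E → ℝ}

theorem flipEdge_flipEdge (r : E → ℝ) (e : E) : flipEdge a b (flipEdge a b r e) e = r := by
  simp [flipEdge]

theorem flipEdge_eq_or_eq (hr : ∀ i, r i = a ∨ r i = b) (e i : E) :
    flipEdge a b r e i = a ∨ flipEdge a b r e i = b := by
  by_cases hi : i = e
  · subst hi
    rcases hr i with h | h <;> simp [flipEdge, h]
  · simpa [flipEdge, hi] using hr i

end Flip

namespace IsBernoulliIID

variable {E : Type*} {μ : Measure (E → ℝ)} {a b : ℝ} {f : (E → ℝ) → ℝ} {K : ℝ}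

theorem ae_mem (hμ : IsBernoulliIID E μ a b) (i : E) : ∀ᵐ r ∂μ, r i ∈ ({a, b} : Set ℝ) := by
  refine ae_of_ae_map (measurable_pi_apply i).aemeasurable ?_
  rw [hμ.2.2 i, ae_add_measure_iff]
  exact ⟨Measure.ae_smul_measure (by simp) _, Measure.ae_smul_measure (by simp) _⟩

theorem measurePreserving_flipEdge [DecidableEq E] (hμ : IsBernoulliIID E μ a b) (e : E) :
    MeasurePreserving (fun r => flipEdge a b r e) μ μ := by
  have := hμ.1
  set ν : Measure ℝ := (2⁻¹ : ENNReal) • Measure.dirac a + (2⁻¹ : ENNReal) • Measure.dirac b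
  have : IsProbabilityMeasure ν := by
    have := Measure.isProbabilityMeasure_map (μ := μ) (measurable_pi_apply e).aemeasurable
    rwa [hμ.2.2 e] at this
  -- `μ` is the product of its marginals `ν`, and `ν` is invariant under `x ↦ a + b - x`.
  have hμν : μ = Measure.infinitePi fun _ : E => ν := by
    simpa [funext hμ.2.2, Measure.map_id'] using
      hμ.2.1.map_fun_eq_infinitePi_map fun i => measurable_pi_apply i
  set τ : E → ℝ → ℝ := fun i x => if i = e then a + b - x else x
  have hτ : ∀ i, Measurable (τ i) := fun i => by
    by_cases hi : i = e <;> simp only [τ, hi, if_true, if_false] <;> fun_prop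
  have hν : ∀ i, ν.map (τ i) = ν := fun i => by
    by_cases hi : i = e
    · have hm : Measurable fun x : ℝ => a + b - x := by fun_prop
      simp only [τ, hi, if_true, ν, Measure.map_add _ _ hm, Measure.map_smul,
        Measure.map_dirac' hm, add_sub_cancel_left, add_sub_cancel_right, add_comm]
    · simp [τ, hi]
  have hflip : (fun r => flipEdge a b r e) = fun r i => τ i (r i) := by
    ext r i
    by_cases hi : i = e <;> simp [flipEdge, τ, hi]
  rw [hflip]
  refine ⟨by fun_prop, ?_⟩
  rw [hμν]
  exact (Measure.infinitePi_map_pi _ hτ).trans (by simp only [hν])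

theorem integrable_sq_max_flipEdge_sub [DecidableEq E] (hμ : IsBernoulliIID E μ a b)
    (hf : AEStronglyMeasurable f μ) (hfK : ∀ r, (∀ i, r i = a ∨ r i = b) → |f r| ≤ K) (e : E) :
    Integrable (fun r => max (f (flipEdge a b r e) - f r) 0 ^ 2) μ := by
  have := hμ.1
  refine integrable_of_forall_mem_abs_le hμ.ae_mem (Set.insert_nonempty a {b})
    (((hf.comp_measurePreserving (hμ.measurePreserving_flipEdge e)).sub hf).sup
      aestronglyMeasurable_const |>.pow 2) ((2 * K) ^ 2) fun r hr => ?_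
  have h₁ := abs_le.1 (hfK r hr)
  have h₂ := abs_le.1 (hfK _ (flipEdge_eq_or_eq hr e))
  rw [abs_of_nonneg (sq_nonneg _)]
  exact pow_le_pow_left₀ (le_max_right _ _) (max_le (by linarith) (by linarith)) 2

theorem integral_sq_grad_eq [DecidableEq E] (hμ : IsBernoulliIID E μ a b)
    (hf : AEStronglyMeasurable f μ) (hfK : ∀ r, (∀ i, r i = a ∨ r i = b) → |f r| ≤ K) (e : E) :
    ∫ r, grad a b f e r ^ 2 ∂μ = 2⁻¹ * ∫ r, max (f (flipEdge a b r e) - f r) 0 ^ 2 ∂μ := by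
  have h := integral_sq_sub_comp_eq (hμ.measurePreserving_flipEdge e)
    (fun r => flipEdge_flipEdge r e) (hμ.integrable_sq_max_flipEdge_sub hf hfK e)
  simp only [grad, div_pow, integral_div, h]
  ring

end IsBernoulliIID

namespace Network

variable {V E : Type*} (N : Network V E) (A Z : Set V) {a b : ℝ} {r θ : E → ℝ}

theorem energy_nonneg (hr : ∀ e, 0 ≤ r e) (θ : E → ℝ) : 0 ≤ energy r θ :=
  tsum_nonneg fun e => mul_nonneg (hr e) (sq_nonneg _)

theorem effRes_nonneg (hr : ∀ e, 0 ≤ r e) : 0 ≤ N.effRes r A Z :=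
  Real.sInf_nonneg <| by rintro _ ⟨θ, -, rfl⟩; exact energy_nonneg hr θ

theorem bddBelow_energies (hr : ∀ e, 0 ≤ r e) :
    BddBelow {c | ∃ θ : E → ℝ, N.IsUnitFlow θ A Z ∧ c = energy r θ} :=
  ⟨0, by rintro _ ⟨θ, -, rfl⟩; exact energy_nonneg hr θ⟩

theorem effRes_le_energy (hr : ∀ e, 0 ≤ r e) (hθ : N.IsUnitFlow θ A Z) :
    N.effRes r A Z ≤ energy r θ :=
  csInf_le (N.bddBelow_energies A Z hr) ⟨θ, hθ, rfl⟩

theorem energy_update_of_summable [DecidableEq E] (hs : Summable fun i => r i * θ i ^ 2)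
    (e : E) (x : ℝ) :
    energy (Function.update r e x) θ = energy r θ + (x - r e) * θ e ^ 2 := by
  have hsplit : (fun i => Function.update r e x i * θ i ^ 2) =
      fun i => r i * θ i ^ 2 + (Pi.single e ((x - r e) * θ e ^ 2) : E → ℝ) i := by
    ext i
    by_cases hi : i = e
    · subst hi; simp; ring
    · simp [hi]
  rw [energy, hsplit, hs.tsum_add (hasSum_pi_single e _).summable, tsum_pi_single, energy]

theorem summable_mul_sq_iff (ha : 0 < a) (hr : ∀ e, r e ∈ Set.Icc a b) :
    (Summable fun e => r e * θ e ^ 2) ↔ Summable fun e => θ e ^ 2 := by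
  refine ⟨fun hs => (hs.mul_left a⁻¹).of_nonneg_of_le (fun _ => sq_nonneg _) fun e => ?_,
    fun hs => (hs.mul_left b).of_nonneg_of_le
      (fun e => mul_nonneg (ha.le.trans (hr e).1) (sq_nonneg _))
      fun e => mul_le_mul_of_nonneg_right (hr e).2 (sq_nonneg _)⟩
  rw [le_inv_mul_iff₀ ha]
  exact mul_le_mul_of_nonneg_right (hr e).1 (sq_nonneg _)

theorem energy_le_mul_tsum_sq (ha : 0 < a) (hr : ∀ e, r e ∈ Set.Icc a b) (θ : E → ℝ) :
    energy r θ ≤ b * ∑' e, θ e ^ 2 := by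
  by_cases hs : Summable fun e => θ e ^ 2
  · rw [energy, ← tsum_mul_left]
    exact ((summable_mul_sq_iff ha hr).2 hs).tsum_le_tsum
      (fun e => mul_le_mul_of_nonneg_right (hr e).2 (sq_nonneg _)) (hs.mul_left b)
  · rw [energy, tsum_eq_zero_of_not_summable hs,
      tsum_eq_zero_of_not_summable ((summable_mul_sq_iff ha hr).not.2 hs), mul_zero]

theorem abs_effRes_le (ha : 0 < a) (hr : ∀ e, r e ∈ Set.Icc a b) (hθ : N.IsUnitFlow θ A Z) :
    |N.effRes r A Z| ≤ b * ∑' e, θ e ^ 2 := by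
  have hr0 : ∀ e, 0 ≤ r e := fun e => ha.le.trans (hr e).1
  rw [abs_of_nonneg (N.effRes_nonneg A Z hr0)]
  exact (N.effRes_le_energy A Z hr0 hθ).trans (energy_le_mul_tsum_sq ha hr θ)

/-- The energy of such a flow is the junk value `0` of a divergent `tsum`. -/
theorem effRes_eq_zero_of_not_summable (ha : 0 < a) (hr : ∀ e, r e ∈ Set.Icc a b)
    (hθ : N.IsUnitFlow θ A Z) (hs : ¬ Summable fun e => θ e ^ 2) : N.effRes r A Z = 0 := by
  have hr0 : ∀ e, 0 ≤ r e := fun e => ha.le.trans (hr e).1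
  refine le_antisymm ((N.effRes_le_energy A Z hr0 hθ).trans_eq ?_) (N.effRes_nonneg A Z hr0)
  exact tsum_eq_zero_of_not_summable ((summable_mul_sq_iff ha hr).not.2 hs)

theorem effRes_flipEdge_le [DecidableEq E] (ha : 0 < a) (hab : a ≤ b) (hr : ∀ e, r e = a ∨ r e = b)
    (hθ : N.IsUnitFlow θ A Z) (hmin : energy r θ = N.effRes r A Z)
    (hs : Summable fun e => θ e ^ 2) (e : E) :
    N.effRes (flipEdge a b r e) A Z ≤ N.effRes r A Z + (b - a) * θ e ^ 2 := by
  have hrI : ∀ i, r i ∈ Set.Icc a b := fun i => mem_Icc_of_eq_or_eq hab (hr i)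
  calc N.effRes (flipEdge a b r e) A Z ≤ energy (flipEdge a b r e) θ :=
        N.effRes_le_energy A Z (fun i => ha.le.trans
          (mem_Icc_of_eq_or_eq hab (flipEdge_eq_or_eq hr e i)).1) hθ
    _ = N.effRes r A Z + (a + b - r e - r e) * θ e ^ 2 := by
        rw [flipEdge, energy_update_of_summable ((summable_mul_sq_iff ha hrI).2 hs), hmin]
    _ ≤ N.effRes r A Z + (b - a) * θ e ^ 2 := by
        gcongr _ + ?_ * _
        linarith [(hrI e).1]

theorem sum_sq_max_effRes_flipEdge_sub_le [DecidableEq E] (ha : 0 < a) (hab : a ≤ b)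
    (hr : ∀ e, r e = a ∨ r e = b) (hθ : N.IsUnitFlow θ A Z)
    (hmin : energy r θ = N.effRes r A Z) (hθ1 : ∀ e, |θ e| ≤ 1) (F : Finset E) :
    ∑ e ∈ F, max (N.effRes (flipEdge a b r e) A Z - N.effRes r A Z) 0 ^ 2 ≤
      (b - a) ^ 2 / a * N.effRes r A Z := by
  have hrI : ∀ i, r i ∈ Set.Icc a b := fun i => mem_Icc_of_eq_or_eq hab (hr i)
  by_cases hs : Summable fun e => θ e ^ 2
  · have hterm (e : E) :
        max (N.effRes (flipEdge a b r e) A Z - N.effRes r A Z) 0 ^ 2 ≤ (b - a) ^ 2 * θ e ^ 2 := by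
      have hinc := N.effRes_flipEdge_le A Z ha hab hr hθ hmin hs e
      have hθ2 : θ e ^ 2 ≤ 1 := (sq_le_one_iff_abs_le_one _).2 (hθ1 e)
      have hba : 0 ≤ b - a := sub_nonneg.2 hab
      calc _ ≤ ((b - a) * θ e ^ 2) ^ 2 :=
            pow_le_pow_left₀ (le_max_right _ _) (max_le (by linarith) (by positivity)) 2
        _ = (b - a) ^ 2 * θ e ^ 2 * θ e ^ 2 := by ring
        _ ≤ (b - a) ^ 2 * θ e ^ 2 := mul_le_of_le_one_right (by positivity) hθ2
    have hsumθ : a * ∑ e ∈ F, θ e ^ 2 ≤ N.effRes r A Z := by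
      rw [← hmin, Finset.mul_sum]
      calc ∑ e ∈ F, a * θ e ^ 2 ≤ ∑ e ∈ F, r e * θ e ^ 2 :=
            Finset.sum_le_sum fun e _ => mul_le_mul_of_nonneg_right (hrI e).1 (sq_nonneg _)
        _ ≤ energy r θ := ((summable_mul_sq_iff ha hrI).2 hs).sum_le_tsum F
            fun e _ => mul_nonneg (ha.le.trans (hrI e).1) (sq_nonneg _)
    calc _ ≤ ∑ e ∈ F, (b - a) ^ 2 * θ e ^ 2 := Finset.sum_le_sum fun e _ => hterm e
      _ = (b - a) ^ 2 / a * (a * ∑ e ∈ F, θ e ^ 2) := by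
        rw [← Finset.mul_sum]; field_simp
      _ ≤ _ := by gcongr
  · have h0 {r' : E → ℝ} (hr' : ∀ e, r' e = a ∨ r' e = b) : N.effRes r' A Z = 0 :=
      N.effRes_eq_zero_of_not_summable A Z ha (fun e => mem_Icc_of_eq_or_eq hab (hr' e)) hθ hs
    simp [h0 hr, h0 (flipEdge_eq_or_eq hr _)]

end Network

section Extend

variable {E : Type*} {b : ℝ} {x : ℕ → E} {Y : ℕ → ℝ} {ρ ψ : E → ℝ}

theorem extend_eq_or_eq (hinj : x.Injective) (i : E) :
    (∃ m, x m = i ∧ Function.extend x Y ρ i = Y m) ∨ Function.extend x Y ρ i = ρ i := by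
  by_cases h : ∃ m, x m = i
  · obtain ⟨m, rfl⟩ := h
    exact Or.inl ⟨m, rfl, hinj.extend_apply _ _ _⟩
  · exact Or.inr (Function.extend_apply' _ _ _ h)

theorem summable_extend_mul_sq (hinj : x.Injective) (hb : 0 ≤ b) (hρ : ∀ i, |ρ i| ≤ b)
    (hs : Summable fun i => ψ i ^ 2) {n : ℕ} (hlt : ∀ m, n < m → ψ (x m) = 0) :
    Summable fun i => Function.extend x Y ρ i * ψ i ^ 2 := by
  set c := b + ∑ m ∈ Finset.range (n + 1), |Y m|
  refine (hs.mul_left c).of_norm_bounded fun i => ?_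
  rw [Real.norm_eq_abs, abs_mul, abs_of_nonneg (sq_nonneg (ψ i))]
  have hsum0 : 0 ≤ ∑ m ∈ Finset.range (n + 1), |Y m| := by positivity
  rcases extend_eq_or_eq hinj i with ⟨m, rfl, hm⟩ | hm
  · rcases le_or_gt m n with hmn | hmn
    · gcongr
      rw [hm]
      exact (Finset.single_le_sum (fun k _ => abs_nonneg (Y k))
        (Finset.mem_range.2 (Nat.lt_succ_of_le hmn))).trans (le_add_of_nonneg_left hb)
    · simp [hlt m hmn]
  · gcongr
    rw [hm]
    linarith [hρ i]

theorem energy_extend_le (hinj : x.Injective) (hb : 0 ≤ b) (hY : ∀ m, Y m ≤ 0)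
    (hρ : ∀ i, |ρ i| ≤ b) (hs : Summable fun i => ψ i ^ 2) {n : ℕ}
    (hlt : ∀ m, n < m → ψ (x m) = 0) :
    Network.energy (Function.extend x Y ρ) ψ ≤ b * ∑' i, ψ i ^ 2 + Y n * ψ (x n) ^ 2 := by
  set δ : E → ℝ := Pi.single (x n) ((Y n - b) * ψ (x n) ^ 2)
  have hδ : Summable δ := (hasSum_pi_single _ _).summable
  have hpt (i : E) : Function.extend x Y ρ i * ψ i ^ 2 ≤ b * ψ i ^ 2 + δ i := by
    by_cases hi : i = x n
    · subst hi
      rw [hinj.extend_apply]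
      simp only [δ, Pi.single_eq_same]
      linarith
    · simp only [δ, Pi.single_eq_of_ne hi, add_zero]
      rcases extend_eq_or_eq hinj i with ⟨m, -, hm⟩ | hm <;> rw [hm]
      · nlinarith [hY m, sq_nonneg (ψ i)]
      · exact mul_le_mul_of_nonneg_right (abs_le.1 (hρ i)).2 (sq_nonneg _)
  calc Network.energy (Function.extend x Y ρ) ψ ≤ ∑' i, (b * ψ i ^ 2 + δ i) :=
        (summable_extend_mul_sq hinj hb hρ hs hlt).tsum_le_tsum hpt ((hs.mul_left b).add hδ)
    _ = b * ∑' i, ψ i ^ 2 + (Y n - b) * ψ (x n) ^ 2 := by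
        rw [(hs.mul_left b).tsum_add hδ, tsum_mul_left, tsum_pi_single]
    _ ≤ b * ∑' i, ψ i ^ 2 + Y n * ψ (x n) ^ 2 := by nlinarith [sq_nonneg (ψ (x n))]

end Extend

namespace Network

variable {V E : Type*} (N : Network V E) (A Z : Set V) {a b : ℝ}

/-- Negative resistances `Y n` on the edges `x n` push the energy of `ψ n` below `-n`; the
energies are then unbounded below and `effRes` takes its junk value `0`. -/
theorem exists_effRes_extend_eq_zero (hb : 0 ≤ b) {x : ℕ → E} {ψ : ℕ → E → ℝ}
    (hψ : ∀ n, N.IsUnitFlow (ψ n) A Z) (hs : ∀ n, Summable fun e => ψ n e ^ 2)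
    (hx : ∀ n, ψ n (x n) ≠ 0) (hlt : ∀ m n, m < n → ψ m (x n) = 0) :
    ∃ Y : ℕ → ℝ, ∀ ρ : E → ℝ, (∀ e, |ρ e| ≤ b) →
      N.effRes (Function.extend x Y ρ) A Z = 0 := by
  have hinj : x.Injective := by
    intro m n hmn
    by_contra hne
    rcases lt_or_gt_of_ne hne with h | h
    · exact hx m (hmn ▸ hlt m n h)
    · exact hx n (hmn ▸ hlt n m h)
  set Y : ℕ → ℝ := fun n => -((n + b * ∑' e, ψ n e ^ 2) / ψ n (x n) ^ 2)
  have hY (n : ℕ) : Y n ≤ 0 := by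
    have : 0 ≤ ∑' e, ψ n e ^ 2 := tsum_nonneg fun e => sq_nonneg _
    simp only [Y, neg_nonpos]
    positivity
  have hYx (n : ℕ) : Y n * ψ n (x n) ^ 2 = -(n + b * ∑' e, ψ n e ^ 2) := by
    simp only [Y]
    field_simp [hx n]
  refine ⟨Y, fun ρ hρ => Real.sInf_of_not_bddBelow ?_⟩
  rintro ⟨c, hc⟩
  obtain ⟨n, hn⟩ := exists_nat_gt (-c)
  have h₁ := hc ⟨ψ n, hψ n, rfl⟩
  have h₂ := energy_extend_le hinj hb hY hρ (hs n) fun m hm => hlt n m hm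
  linarith [hYx n]

def flowSupport : Set E := {i | ∃ θ, N.IsUnitFlow θ A Z ∧ θ i ≠ 0}

theorem mem_flowSupport {i : E} : i ∈ N.flowSupport A Z ↔ ∃ θ, N.IsUnitFlow θ A Z ∧ θ i ≠ 0 :=
  Iff.rfl

theorem dependsOn_effRes :
    DependsOn (fun r => N.effRes r A Z) (N.flowSupport A Z) := by
  intro r r' h
  have hen {θ : E → ℝ} (hθ : N.IsUnitFlow θ A Z) : energy r θ = energy r' θ :=
    tsum_congr fun i => by
      by_cases hθi : θ i = 0
      · simp [hθi]
      · rw [h i ((N.mem_flowSupport A Z).2 ⟨θ, hθ, hθi⟩)]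
  simp only [effRes]
  congr 1
  ext c
  exact exists_congr fun θ => ⟨fun ⟨hθ, hc⟩ => ⟨hθ, hc.trans (hen hθ)⟩,
    fun ⟨hθ, hc⟩ => ⟨hθ, hc.trans (hen hθ).symm⟩⟩

theorem upperSemicontinuous_effRes_comp {X : Type*} [TopologicalSpace X] {R : X → E → ℝ}
    (ha : 0 ≤ a) (hR : ∀ s i, R s i ∈ Set.Icc a b) (hRc : ∀ i, Continuous fun s => R s i)
    (hne : ∃ θ, N.IsUnitFlow θ A Z)
    (hs : ∀ θ, N.IsUnitFlow θ A Z → Summable fun e => θ e ^ 2) :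
    UpperSemicontinuous fun s => N.effRes (R s) A Z := by
  have hcont {θ : E → ℝ} (hθ : N.IsUnitFlow θ A Z) : Continuous fun s => energy (R s) θ := by
    refine continuous_tsum (fun i => (hRc i).mul continuous_const) ((hs θ hθ).mul_left b)
      fun i s => ?_
    rw [Real.norm_eq_abs, abs_mul, abs_of_nonneg (sq_nonneg (θ i)),
      abs_of_nonneg (ha.trans (hR s i).1)]
    exact mul_le_mul_of_nonneg_right (hR s i).2 (sq_nonneg _)
  refine upperSemicontinuous_iff_isOpen_preimage.2 fun y => ?_
  obtain ⟨θ₀, hθ₀⟩ := hne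
  have hpre : (fun s => N.effRes (R s) A Z) ⁻¹' Set.Iio y =
      ⋃ θ ∈ {θ | N.IsUnitFlow θ A Z}, {s | energy (R s) θ < y} := by
    ext s
    simp only [Set.mem_preimage, Set.mem_Iio, effRes, Set.mem_iUnion, Set.mem_ofPred_eq,
      exists_prop]
    rw [csInf_lt_iff (N.bddBelow_energies A Z fun i => ha.trans (hR s i).1) ⟨_, θ₀, hθ₀, rfl⟩]
    constructor
    · rintro ⟨_, ⟨θ, hθ, rfl⟩, hlt⟩
      exact ⟨θ, hθ, hlt⟩
    · rintro ⟨θ, hθ, hlt⟩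
      exact ⟨_, ⟨θ, hθ, rfl⟩, hlt⟩
  rw [hpre]
  exact isOpen_biUnion fun θ hθ => isOpen_lt (hcont hθ) continuous_const

/-- If all unit flows live on a countable edge set `W`, then `effRes` factors through the
restriction to `W`, where (after clamping the resistances into `[a, b]`) it is upper
semicontinuous for the product topology, hence Borel. -/
theorem aestronglyMeasurable_effRes (ha : 0 ≤ a) (hab : a ≤ b) {μ : Measure (E → ℝ)}
    (hμ : ∀ i, ∀ᵐ r ∂μ, r i ∈ Set.Icc a b) (hne : ∃ θ, N.IsUnitFlow θ A Z)
    (hs : ∀ θ, N.IsUnitFlow θ A Z → Summable fun e => θ e ^ 2)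
    (hW : (N.flowSupport A Z).Countable) :
    AEStronglyMeasurable (fun r => N.effRes r A Z) μ := by
  set W := N.flowSupport A Z
  have : Countable W := hW.to_subtype
  let R : (W → ℝ) → E → ℝ := fun s i =>
    if h : i ∈ W then (Set.projIcc a b hab (s ⟨i, h⟩) : ℝ) else a
  have hR (s : W → ℝ) (i : E) : R s i ∈ Set.Icc a b := by
    by_cases h : i ∈ W
    · simp only [R, dif_pos h]
      exact Subtype.prop _
    · simp [R, h, hab]
  have hRc (i : E) : Continuous fun s => R s i := by
    by_cases h : i ∈ W
    · simp only [R, dif_pos h]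
      exact continuous_subtype_val.comp (continuous_projIcc.comp (continuous_apply _))
    · simp only [R, dif_neg h]
      exact continuous_const
  have hres : Measurable fun r : E → ℝ => fun i : W => r i :=
    measurable_pi_lambda _ fun i => measurable_pi_apply _
  refine ((N.upperSemicontinuous_effRes_comp A Z ha hR hRc hne hs).measurable.comp
    hres).aestronglyMeasurable.congr ?_
  filter_upwards [(ae_ball_iff hW).2 fun i _ => hμ i] with r hr
  refine N.dependsOn_effRes A Z fun i (hi : i ∈ W) => ?_
  simp only [R, dif_pos hi, Set.projIcc_of_mem hab (hr i hi)]

theorem exists_eqOn_effRes_eq_effRes_flipEdge [DecidableEq E] (ha : 0 < a) (hab : a ≤ b)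
    (hs : ∀ θ, N.IsUnitFlow θ A Z → Summable fun e => θ e ^ 2)
    (hW : ¬ (N.flowSupport A Z).Countable) (e : E) {I : Set E}
    (hI : I.Countable) {r : E → ℝ} (hr : ∀ i, r i = a ∨ r i = b) :
    ∃ r', Set.EqOn r' r I ∧ N.effRes r' A Z = N.effRes (flipEdge a b r' e) A Z := by
  choose! ψ hψ hψne using fun i (hi : i ∈ N.flowSupport A Z) => hi
  obtain ⟨x, hxW, hlt⟩ := Set.exists_seq_of_not_countable hW (hI.insert e)
    (fun i => Function.support (ψ i)) fun i hi => by
      simpa using (hs _ (hψ i hi)).countable_support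
  obtain ⟨Y, hY⟩ := N.exists_effRes_extend_eq_zero A Z (ha.le.trans hab)
    (fun n => hψ _ (hxW n).1) (fun n => hs _ (hψ _ (hxW n).1)) (fun n => hψne _ (hxW n).1)
    fun m n hmn => Function.notMem_support.1 (hlt m n hmn)
  have hoff {i : E} (hi : i ∈ insert e I) : ¬ ∃ n, x n = i := by
    rintro ⟨n, rfl⟩
    exact (hxW n).2 hi
  have hbound {ρ : E → ℝ} (hρ : ∀ i, ρ i = a ∨ ρ i = b) (i : E) : |ρ i| ≤ b := by
    rcases hρ i with h | h <;> rw [h, abs_of_nonneg] <;> linarith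
  refine ⟨Function.extend x Y r,
    fun i hi => Function.extend_apply' _ _ _ (hoff (Set.mem_insert_of_mem e hi)), ?_⟩
  have hflip : flipEdge a b (Function.extend x Y r) e = Function.extend x Y (flipEdge a b r e) := by
    ext i
    by_cases hi : i = e
    · subst hi
      simp [flipEdge, Function.extend_apply' _ _ _ (hoff (Set.mem_insert i I))]
    · simp [flipEdge, hi, Function.extend_def]
  rw [hflip, hY r (hbound hr), hY _ (hbound (flipEdge_eq_or_eq hr e))]

theorem integral_sq_grad_eq_zero_of_not_aestronglyMeasurable [DecidableEq E] (ha : 0 < a)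
    (hab : a ≤ b) {μ : Measure (E → ℝ)} (hμ : IsBernoulliIID E μ a b) {θ : (E → ℝ) → (E → ℝ)}
    (hflow : ∀ r : E → ℝ, (∀ e, r e = a ∨ r e = b) → N.IsUnitFlow (θ r) A Z)
    (hf : ¬ AEStronglyMeasurable (fun r => N.effRes r A Z) μ) (e : E) :
    ∫ r, grad a b (fun r => N.effRes r A Z) e r ^ 2 ∂μ = 0 := by
  set f := fun r => N.effRes r A Z
  by_cases hG : AEStronglyMeasurable (fun r => grad a b f e r ^ 2) μ
  swap
  · exact integral_undef fun h => hG h.1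
  suffices hflat : ∀ I : Set E, I.Countable → ∀ r : E → ℝ, (∀ i, r i = a ∨ r i = b) →
      ∃ r', Set.EqOn r' r I ∧ f r' = f (flipEdge a b r' e) by
    have hle : (fun r => grad a b f e r ^ 2) ≤ᵐ[μ] 0 :=
      ae_le_of_forall_exists_eqOn hμ.ae_mem (Set.insert_nonempty a {b}) hG
        aestronglyMeasurable_const fun I hI r hr => by
          obtain ⟨r', hr'I, hr'⟩ := hflat I hI r hr
          exact ⟨r', hr'I, by simp [grad, hr']⟩
    exact integral_eq_zero_of_ae (hle.mono fun r hr => le_antisymm hr (sq_nonneg _))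
  intro I hI r hr
  by_cases hwild : ∃ ψ, N.IsUnitFlow ψ A Z ∧ ¬ Summable fun i => ψ i ^ 2
  · obtain ⟨ψ, hψ, hψs⟩ := hwild
    have h0 {r' : E → ℝ} (hr' : ∀ i, r' i = a ∨ r' i = b) : f r' = 0 :=
      N.effRes_eq_zero_of_not_summable A Z ha (fun i => mem_Icc_of_eq_or_eq hab (hr' i)) hψ hψs
    exact ⟨r, Set.eqOn_refl r I, by rw [h0 hr, h0 (flipEdge_eq_or_eq hr e)]⟩
  push Not at hwild
  by_cases hW : (N.flowSupport A Z).Countable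
  · refine (hf (N.aestronglyMeasurable_effRes A Z ha.le hab (fun i => ?_)
      ⟨_, hflow _ fun _ => Or.inl rfl⟩ hwild hW)).elim
    exact (hμ.ae_mem i).mono fun r hr => mem_Icc_of_eq_or_eq hab hr
  · exact N.exists_eqOn_effRes_eq_effRes_flipEdge A Z ha hab hwild hW e hI hr

theorem sum_integral_sq_grad_le_of_aestronglyMeasurable [DecidableEq E] (ha : 0 < a)
    (hab : a ≤ b) {μ : Measure (E → ℝ)} (hμ : IsBernoulliIID E μ a b) {θ : (E → ℝ) → (E → ℝ)}
    (hflow : ∀ r : E → ℝ, (∀ e, r e = a ∨ r e = b) → N.IsUnitFlow (θ r) A Z)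
    (hmin : ∀ r : E → ℝ, (∀ e, r e = a ∨ r e = b) →
      Network.energy r (θ r) = N.effRes r A Z)
    (hbdd : ∀ r : E → ℝ, (∀ e, r e = a ∨ r e = b) → ∀ e, |θ r e| ≤ 1)
    (hf : AEStronglyMeasurable (fun r => N.effRes r A Z) μ) (F : Finset E) :
    ∑ e ∈ F, ∫ r, grad a b (fun r => N.effRes r A Z) e r ^ 2 ∂μ
      ≤ (b - a) ^ 2 / (2 * a) * ∫ r, N.effRes r A Z ∂μ := by
  have := hμ.1
  set f := fun r => N.effRes r A Z
  have hfK (r : E → ℝ) (hr : ∀ i, r i = a ∨ r i = b) :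
      |f r| ≤ b * ∑' e, θ (fun _ => a) e ^ 2 :=
    N.abs_effRes_le A Z ha (fun i => mem_Icc_of_eq_or_eq hab (hr i))
      (hflow _ fun _ => Or.inl rfl)
  have hfint : Integrable f μ :=
    integrable_of_forall_mem_abs_le hμ.ae_mem (Set.insert_nonempty a {b}) hf _ hfK
  have hφint (e : E) := hμ.integrable_sq_max_flipEdge_sub hf hfK e
  have hsum : ∫ r, ∑ e ∈ F, max (f (flipEdge a b r e) - f r) 0 ^ 2 ∂μ
      ≤ ∫ r, (b - a) ^ 2 / a * f r ∂μ :=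
    integral_mono_ae (integrable_finsetSum F fun e _ => hφint e) (hfint.const_mul _) <|
      ae_le_of_forall_mem_le hμ.ae_mem (Set.insert_nonempty a {b})
        (integrable_finsetSum F fun e _ => hφint e).aestronglyMeasurable
        (hfint.const_mul _).aestronglyMeasurable fun r hr =>
          N.sum_sq_max_effRes_flipEdge_sub_le A Z ha hab hr (hflow r hr) (hmin r hr)
            (hbdd r hr) F
  rw [integral_finsetSum F fun e _ => hφint e, integral_const_mul] at hsum
  calc ∑ e ∈ F, ∫ r, grad a b f e r ^ 2 ∂μ
      = 2⁻¹ * ∑ e ∈ F, ∫ r, max (f (flipEdge a b r e) - f r) 0 ^ 2 ∂μ := by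
        simp only [hμ.integral_sq_grad_eq hf hfK, Finset.mul_sum]
    _ ≤ 2⁻¹ * ((b - a) ^ 2 / a * ∫ r, f r ∂μ) := by gcongr
    _ = (b - a) ^ 2 / (2 * a) * ∫ r, f r ∂μ := by field_simp

end Network

theorem sum_sq_grad_le_general {V E : Type*} [DecidableEq E]
    (a b : ℝ) (ha : 0 < a) (hab : a ≤ b)
    (N : Network V E) (A Z : Set V)
    (μ : Measure (E → ℝ)) (hμ : IsBernoulliIID E μ a b)
    (θ : (E → ℝ) → (E → ℝ))
    (hflow : ∀ r : E → ℝ, (∀ e, r e = a ∨ r e = b) → N.IsUnitFlow (θ r) A Z)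
    (hmin : ∀ r : E → ℝ, (∀ e, r e = a ∨ r e = b) →
      Network.energy r (θ r) = N.effRes r A Z)
    (hbdd : ∀ r : E → ℝ, (∀ e, r e = a ∨ r e = b) → ∀ e, |θ r e| ≤ 1) :
    (∑' e : E, ∫ r, (grad a b (fun r => N.effRes r A Z) e r) ^ 2 ∂μ)
      ≤ (b - a) ^ 2 / (2 * a) * ∫ r, N.effRes r A Z ∂μ := by
  refine Real.tsum_le_of_sum_le (fun e => integral_nonneg fun r => sq_nonneg _) fun F => ?_
  by_cases hf : AEStronglyMeasurable (fun r => N.effRes r A Z) μ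
  · exact N.sum_integral_sq_grad_le_of_aestronglyMeasurable A Z ha hab hμ hflow hmin hbdd hf F
  · rw [integral_undef fun h => hf h.1, mul_zero]
    exact (Finset.sum_eq_zero fun e _ =>
      N.integral_sq_grad_eq_zero_of_not_aestronglyMeasurable A Z ha hab hμ hflow hf e).le

/-- With i.i.d. Bernoulli `{a,b}` resistances and `f(r) = R_r(A ↔ Z)`, assuming for each
configuration a minimizing unit flow `θ_r` with `|θ_r(e)| ≤ 1` for all `e`, one has
`Σ_e ‖Δ_e f‖₂² ≤ ((b-a)²/(2a)) · E[f]`. -/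
theorem sum_sq_grad_le {V E : Type*} [DecidableEq E]
    (a b : ℝ) (ha : 0 < a) (hab : a ≤ b)
    (N : Network V E) (A Z : Set V)
    (hdisj : Disjoint A Z) (hA : A.Nonempty) (hZ : Z.Nonempty)
    (hAfin : A.Finite) (hZfin : Z.Finite)
    (μ : Measure (E → ℝ)) (hμ : IsBernoulliIID E μ a b)
    (θ : (E → ℝ) → (E → ℝ))
    (hflow : ∀ r : E → ℝ, (∀ e, r e = a ∨ r e = b) → N.IsUnitFlow (θ r) A Z)
    (hmin : ∀ r : E → ℝ, (∀ e, r e = a ∨ r e = b) →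
      Network.energy r (θ r) = N.effRes r A Z)
    (hbdd : ∀ r : E → ℝ, (∀ e, r e = a ∨ r e = b) → ∀ e, |θ r e| ≤ 1) :
    (∑' e : E, ∫ r, (grad a b (fun r => N.effRes r A Z) e r) ^ 2 ∂μ)
      ≤ (b - a) ^ 2 / (2 * a) * ∫ r, N.effRes r A Z ∂μ :=
  sum_sq_grad_le_general a b ha hab N A Z μ hμ θ hflow hmin hbdd
end
end
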